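/- arXiv:1702.02624 — 2 statements merged into one kernel-verified Lean document; each statement's English description precedes it below -/
import Mathlib

section
/- Let F be a finite nonempty type, let J and m be natural numbers, and let Ω = Fin J → F be the space of parameter configurations. Let G be a connected simple graph on F such that any two vertices of F are joined by a walk of length at most m. Let K be a row-stochastic matrix on Ω such that for every configuration P : Ω, every coordinate j : Fin J, and every value v : F with v = P j or G.Adj (P j) v, the one-step transition probability K P (Function.update P j v) is strictly positive. Then for all configurations P, P' : Ω, the (J·m)-step transition probability (K^(J·m)) P P' is strictly positive; in particular the Markov chain with transition matrix K is irreducible. -/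
/-!
Change the coordinates one at a time. Coordinate `j` is moved from `P j` to `P' j` along a walk
of `G` of length at most `m`, each edge of the walk being a one-coordinate correction of positive
probability; since leaving a coordinate unchanged also has positive probability, the chain can
idle until exactly `m` steps have elapsed. Chaining the `J` blocks of `m` steps gives a path of
length `J * m` from `P` to `P'`, and positive entries multiply along paths of a nonnegative matrix.
-/

open Finset Function

namespace Matrix

variable {l n o R : Type*} [Fintype n] [Semiring R] [PartialOrder R] [IsStrictOrderedRing R]

theorem mul_apply_pos {A : Matrix l n R} {B : Matrix n o R} (hA : ∀ i j, 0 ≤ A i j)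
    (hB : ∀ i j, 0 ≤ B i j) {i : l} {j : n} {k : o} (hij : 0 < A i j) (hjk : 0 < B j k) :
    0 < (A * B) i k :=
  sum_pos' (fun x _ => mul_nonneg (hA i x) (hB x k)) ⟨j, mem_univ j, mul_pos hij hjk⟩

variable [DecidableEq n] {A : Matrix n n R}

theorem pow_add_apply_pos (hA : ∀ i j, 0 ≤ A i j) {a b : ℕ} {i j k : n}
    (hij : 0 < (A ^ a) i j) (hjk : 0 < (A ^ b) j k) : 0 < (A ^ (a + b)) i k := by
  rw [pow_add]
  exact mul_apply_pos (pow_apply_nonneg hA a) (pow_apply_nonneg hA b) hij hjk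

theorem pow_apply_self_pos (hA : ∀ i j, 0 ≤ A i j) (hdiag : ∀ i, 0 < A i i) (k : ℕ) (i : n) :
    0 < (A ^ k) i i := by
  induction k with
  | zero => simp
  | succ k ih =>
    rw [pow_succ]
    exact mul_apply_pos (pow_apply_nonneg hA k) hA ih (hdiag i)

theorem pow_apply_pos_of_le (hA : ∀ i j, 0 ≤ A i j) (hdiag : ∀ i, 0 < A i i) {a b : ℕ}
    (hab : a ≤ b) {i j : n} (h : 0 < (A ^ a) i j) : 0 < (A ^ b) i j := by
  rw [← Nat.add_sub_cancel' hab]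
  exact pow_add_apply_pos hA h (pow_apply_self_pos hA hdiag _ j)

end Matrix

def IsCoordinateCorrection {ι F R : Type*} [DecidableEq ι] [Zero R] [LT R]
    (G : SimpleGraph F) (K : Matrix (ι → F) (ι → F) R) : Prop :=
  ∀ (P : ι → F) (j : ι) (v : F), (v = P j ∨ G.Adj (P j) v) → 0 < K P (update P j v)

namespace IsCoordinateCorrection

variable {ι F R : Type*} [DecidableEq ι] [Semiring R] [PartialOrder R]
  {G : SimpleGraph F} {K : Matrix (ι → F) (ι → F) R}

theorem apply_self_pos (hK : IsCoordinateCorrection G K) (j : ι) (P : ι → F) : 0 < K P P := by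
  simpa only [update_eq_self] using hK P j (P j) (Or.inl rfl)

variable [Fintype ι] [Fintype F] [DecidableEq F] [IsStrictOrderedRing R]

theorem pow_length_apply_update_pos (hK : IsCoordinateCorrection G K)
    (hK_nonneg : ∀ s t, 0 ≤ K s t) {a b : F} (w : G.Walk a b) {P : ι → F} {j : ι}
    (hPj : P j = a) : 0 < (K ^ w.length) P (update P j b) := by
  induction w generalizing P with
  | nil => simp [← hPj]
  | @cons a c b hac w ih =>
    have hrest := ih (P := update P j c) (update_self j c P)
    rw [update_idem] at hrest
    rw [SimpleGraph.Walk.length_cons, pow_succ']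
    exact K.mul_apply_pos hK_nonneg (K.pow_apply_nonneg hK_nonneg _)
      (hK P j c (Or.inr (hPj ▸ hac))) hrest

theorem pow_apply_update_pos (hK : IsCoordinateCorrection G K) (hK_nonneg : ∀ s t, 0 ≤ K s t)
    {m : ℕ} (hdiam : ∀ u v : F, ∃ w : G.Walk u v, w.length ≤ m) (P : ι → F) (j : ι) (v : F) :
    0 < (K ^ m) P (update P j v) := by
  obtain ⟨w, hw⟩ := hdiam (P j) v
  exact K.pow_apply_pos_of_le hK_nonneg (hK.apply_self_pos j) hw
    (hK.pow_length_apply_update_pos hK_nonneg w rfl)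

theorem pow_card_mul_apply_piecewise_pos (hK : IsCoordinateCorrection G K)
    (hK_nonneg : ∀ s t, 0 ≤ K s t) {m : ℕ} (hdiam : ∀ u v : F, ∃ w : G.Walk u v, w.length ≤ m)
    (P P' : ι → F) (s : Finset ι) : 0 < (K ^ (#s * m)) P (s.piecewise P' P) := by
  induction s using Finset.induction_on with
  | empty => simp
  | insert j s hj ih =>
    rw [card_insert_of_notMem hj, Nat.succ_mul, piecewise_insert]
    exact K.pow_add_apply_pos hK_nonneg ih (hK.pow_apply_update_pos hK_nonneg hdiam _ j _)

end IsCoordinateCorrection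

theorem irreducibility_of_coordinate_corrections_general
    {F : Type*} [Fintype F] [DecidableEq F]
    (J m : ℕ) (G : SimpleGraph F)
    (hdiam : ∀ u v : F, ∃ w : G.Walk u v, w.length ≤ m)
    (K : Matrix (Fin J → F) (Fin J → F) ℝ)
    (hK_nonneg : ∀ s t, 0 ≤ K s t)
    (hK_pos : ∀ (P : Fin J → F) (j : Fin J) (v : F),
      (v = P j ∨ G.Adj (P j) v) → 0 < K P (Function.update P j v)) :
    ∀ P P' : Fin J → F, 0 < (K ^ (J * m)) P P' := by
  intro P P'
  have h := IsCoordinateCorrection.pow_card_mul_apply_piecewise_pos hK_pos hK_nonneg hdiam P P'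
    univ
  rwa [card_univ, Fintype.card_fin, piecewise_univ] at h

/-- **Irreducibility** (paper's Theorem): if at each step the Markov chain on
parameter configurations `Ω = Fin J → F` can, with positive probability, change any
single coordinate to any value adjacent (in a graph `G` of diameter at most `m`)
to its current value, or leave it unchanged, then every configuration is reachable
from every other in exactly `J * m` steps with positive probability. -/
theorem irreducibility_of_coordinate_corrections
    {F : Type*} [Fintype F] [Nonempty F] [DecidableEq F]
    (J m : ℕ) (G : SimpleGraph F) (hG : G.Connected)
    (hdiam : ∀ u v : F, ∃ w : G.Walk u v, w.length ≤ m)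
    (K : Matrix (Fin J → F) (Fin J → F) ℝ)
    (hK_nonneg : ∀ s t, 0 ≤ K s t)
    (hK_rowsum : ∀ s, ∑ t, K s t = 1)
    (hK_pos : ∀ (P : Fin J → F) (j : Fin J) (v : F),
      (v = P j ∨ G.Adj (P j) v) → 0 < K P (Function.update P j v)) :
    ∀ P P' : Fin J → F, 0 < (K ^ (J * m)) P P' :=
  irreducibility_of_coordinate_corrections_general J m G hdiam K hK_nonneg hK_pos
end

section
/- Let n ≥ 1 and J be natural numbers, let A be a real number with A ≥ 1/n, and let Ω = Fin J → Fin (n+1) be the space of parameter configurations, where a coordinate value i represents the real parameter i/n ∈ [0,1]. Let K be a row-stochastic matrix on Ω such that for every configuration P : Ω, every coordinate j : Fin J, and every value v : Fin (n+1) with |(v : ℝ)/n − (P j : ℝ)/n| ≤ A, the one-step transition probability K P (Function.update P j v) is strictly positive. Then there exists a natural number N such that for all configurations P, P' : Ω, the N-step transition probability (K^N) P P' is strictly positive; in particular the Markov chain with transition matrix K is both irreducible and aperiodic. -/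
/-!
A single move changes one parameter by one grid step `1/n ≤ A`, so it has positive probability,
and so does staying put. From any configuration the chain can therefore walk to any target
along a path that lowers the `ℓ¹` grid distance by one at every move, and then wait there.
Since that distance is at most `J * n`, every entry of `K ^ m` is positive as soon as
`m ≥ J * n`; return times `J * n + 1` and `J * n + 2` then force the period to be `1`.
-/

open Finset

namespace Matrix

variable {ι : Type*} [Fintype ι] [DecidableEq ι] {K : Matrix ι ι ℝ}

theorem pow_succ_apply_pos (hK : ∀ s t, 0 ≤ K s t) {m : ℕ} {s u t : ι}
    (hsu : 0 < K s u) (hut : 0 < (K ^ m) u t) : 0 < (K ^ (m + 1)) s t := by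
  rw [pow_succ', mul_apply]
  exact sum_pos' (fun w _ => mul_nonneg (hK s w) (pow_apply_nonneg hK m w t))
    ⟨u, mem_univ u, mul_pos hsu hut⟩

/-- `0 < K t t` lets the chain wait at `t` once it has arrived early. -/
theorem pow_apply_pos_of_potential (hK : ∀ s t, 0 ≤ K s t) {t : ι} (ht : 0 < K t t)
    (d : ι → ℕ) (hdt : d t = 0) (hstep : ∀ s ≠ t, ∃ u, 0 < K s u ∧ d u < d s)
    {m : ℕ} {s : ι} (hs : d s ≤ m) : 0 < (K ^ m) s t := by
  induction m generalizing s with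
  | zero =>
    obtain rfl : s = t := by
      by_contra hst
      obtain ⟨u, -, hu⟩ := hstep s hst
      omega
    simp
  | succ m ih =>
    by_cases hst : s = t
    · subst hst
      exact pow_succ_apply_pos hK ht (ih (by omega))
    · obtain ⟨u, hsu, hu⟩ := hstep s hst
      exact pow_succ_apply_pos hK hsu (ih (by omega))

end Matrix

theorem Fin.exists_dist_le_one_dist_lt {N : ℕ} {a b : Fin N} (hab : a ≠ b) :
    ∃ v : Fin N, Nat.dist v a ≤ 1 ∧ Nat.dist v b < Nat.dist a b := by
  have hab' : (a : ℕ) ≠ b := Fin.val_ne_of_ne hab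
  rcases lt_or_gt_of_ne hab' with h | h
  · exact ⟨⟨a + 1, by omega⟩, by simp [Nat.dist], by simp only [Nat.dist]; omega⟩
  · exact ⟨⟨a - 1, by omega⟩, by simp only [Nat.dist]; omega, by simp only [Nat.dist]; omega⟩

theorem abs_natCast_div_sub_natCast_div_le {a b : ℕ} (h : Nat.dist a b ≤ 1) (n : ℕ) :
    |(a : ℝ) / n - (b : ℝ) / n| ≤ 1 / n := by
  rw [← sub_div, abs_div, Nat.abs_cast]
  gcongr
  have hab : (b : ℝ) ≤ a + 1 := by exact_mod_cast (by unfold Nat.dist at h; omega : b ≤ a + 1)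
  have hba : (a : ℝ) ≤ b + 1 := by exact_mod_cast (by unfold Nat.dist at h; omega : a ≤ b + 1)
  exact abs_sub_le_iff.2 ⟨by linarith, by linarith⟩

def gridDist {J n : ℕ} (P P' : Fin J → Fin (n + 1)) : ℕ :=
  ∑ j, Nat.dist (P j) (P' j)

theorem gridDist_le {J n : ℕ} (P P' : Fin J → Fin (n + 1)) : gridDist P P' ≤ J * n := by
  calc gridDist P P' ≤ ∑ _j : Fin J, n := sum_le_sum fun j _ => by
        have := (P j).isLt; have := (P' j).isLt; unfold Nat.dist; omega
    _ = J * n := by simp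

theorem gridDist_update_lt {J n : ℕ} {P P' : Fin J → Fin (n + 1)} {j : Fin J}
    {v : Fin (n + 1)} (hv : Nat.dist v (P' j) < Nat.dist (P j) (P' j)) :
    gridDist (Function.update P j v) P' < gridDist P P' := by
  refine sum_lt_sum (fun i _ => ?_) ⟨j, mem_univ j, by simpa using hv⟩
  rcases eq_or_ne i j with rfl | hij
  · simpa using hv.le
  · simp [Function.update_of_ne hij]

theorem grid_pow_apply_pos {J n : ℕ} {K : Matrix (Fin J → Fin (n + 1)) (Fin J → Fin (n + 1)) ℝ}
    (hK : ∀ s t, 0 ≤ K s t) (hdiag : ∀ P, 0 < K P P)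
    (hstep : ∀ P j (v : Fin (n + 1)), Nat.dist v (P j) ≤ 1 → 0 < K P (Function.update P j v))
    {m : ℕ} (hm : J * n ≤ m) (P P' : Fin J → Fin (n + 1)) : 0 < (K ^ m) P P' := by
  refine Matrix.pow_apply_pos_of_potential hK (hdiag P') (gridDist · P')
    (by simp [gridDist, Nat.dist]) (fun Q hQ => ?_) ((gridDist_le P P').trans hm)
  obtain ⟨j, hj⟩ := Function.ne_iff.mp hQ
  obtain ⟨v, hv₁, hv₂⟩ := Fin.exists_dist_le_one_dist_lt hj
  exact ⟨_, hstep Q j v hv₁, gridDist_update_lt hv₂⟩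

theorem correction_process_irreducible_aperiodic_general
    (n : ℕ) (J : ℕ) (A : ℝ) (hA : 1 / (n : ℝ) ≤ A)
    (K : Matrix (Fin J → Fin (n + 1)) (Fin J → Fin (n + 1)) ℝ)
    (hK_nonneg : ∀ s t, 0 ≤ K s t)
    (hK_rowsum : ∀ s, ∑ t, K s t = 1)
    (hK_pos : ∀ (P : Fin J → Fin (n + 1)) (j : Fin J) (v : Fin (n + 1)),
      |((v : ℕ) : ℝ) / n - ((P j : ℕ) : ℝ) / n| ≤ A →
      0 < K P (Function.update P j v)) :
    (∃ N : ℕ, ∀ P P' : Fin J → Fin (n + 1), 0 < (K ^ N) P P') ∧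
    (∀ P P' : Fin J → Fin (n + 1), ∃ k : ℕ, 0 < (K ^ k) P P') ∧
    (∀ P : Fin J → Fin (n + 1), ∀ d : ℕ,
      (∀ k : ℕ, k ∈ {k : ℕ | 1 ≤ k ∧ 0 < (K ^ k) P P} → d ∣ k) → d = 1) := by
  have hstep : ∀ P j (v : Fin (n + 1)), Nat.dist v (P j) ≤ 1 → 0 < K P (Function.update P j v) :=
    fun P j v h => hK_pos P j v ((abs_natCast_div_sub_natCast_div_le h n).trans hA)
  have hdiag : ∀ P, 0 < K P P := by
    rcases J.eq_zero_or_pos with rfl | hJ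
    · intro P
      have := hK_rowsum P
      rw [Fintype.sum_subsingleton _ P] at this
      linarith
    · intro P
      simpa using hstep P ⟨0, hJ⟩ (P ⟨0, hJ⟩) (by simp [Nat.dist])
  have hpos := fun m (hm : J * n ≤ m) => grid_pow_apply_pos hK_nonneg hdiag hstep hm
  refine ⟨⟨J * n, hpos _ le_rfl⟩, fun P P' => ⟨J * n, hpos _ le_rfl P P'⟩, fun P d hd => ?_⟩
  have h₁ := hd (J * n + 1) ⟨by omega, hpos _ (by omega) P P⟩
  have h₂ := hd (J * n + 1 + 1) ⟨by omega, hpos _ (by omega) P P⟩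
  exact Nat.dvd_one.mp ((Nat.dvd_add_right h₁).mp h₂)

/-- **Irreducibility and aperiodicity of the correction process** (paper's combined
theorems): on the configuration space `Ω = Fin J → Fin (n+1)` of `J` parameters
taking values in the grid `{0, 1/n, …, 1}`, if every single-coordinate change of
amplitude at most `A ≥ 1/n` (including the trivial change) has positive one-step
probability, then some power of `K` has all entries positive; in particular the
chain is irreducible and aperiodic (every state has period `1`). -/
theorem correction_process_irreducible_aperiodic
    (n : ℕ) (hn : 1 ≤ n) (J : ℕ) (A : ℝ) (hA : 1 / (n : ℝ) ≤ A)
    (K : Matrix (Fin J → Fin (n + 1)) (Fin J → Fin (n + 1)) ℝ)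
    (hK_nonneg : ∀ s t, 0 ≤ K s t)
    (hK_rowsum : ∀ s, ∑ t, K s t = 1)
    (hK_pos : ∀ (P : Fin J → Fin (n + 1)) (j : Fin J) (v : Fin (n + 1)),
      |((v : ℕ) : ℝ) / n - ((P j : ℕ) : ℝ) / n| ≤ A →
      0 < K P (Function.update P j v)) :
    (∃ N : ℕ, ∀ P P' : Fin J → Fin (n + 1), 0 < (K ^ N) P P') ∧
    (∀ P P' : Fin J → Fin (n + 1), ∃ k : ℕ, 0 < (K ^ k) P P') ∧
    (∀ P : Fin J → Fin (n + 1), ∀ d : ℕ,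
      (∀ k : ℕ, k ∈ {k : ℕ | 1 ≤ k ∧ 0 < (K ^ k) P P} → d ∣ k) → d = 1) :=
  correction_process_irreducible_aperiodic_general n J A hA K hK_nonneg hK_rowsum hK_pos
end
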